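/- arXiv:1711.02421 — 3 statements merged into one kernel-verified Lean document; each statement's English description precedes it below -/
import Mathlib

section
/- Let X be a discrete real random variable with CDF F_X and probability mass function P_X, and let θ be uniformly distributed on [0,1] independent of X. Then F_X(X) − θ·P_X(X) is uniformly distributed on [0,1], and consequently Φ⁻¹(F_X(X) − θ·P_X(X)) has the standard normal distribution. -/
/-!
Write `μ` for the law of `X`, `F = cdf μ` and `p x = μ {x}`. Given `X = x`, the variable
`F x - θ p x` is uniform on the interval `(F x - p x, F x]` of length `p x`. These intervals are
pairwise disjoint (for `x < y`, `F x ≤ F y - p y`), and since `μ` is carried by countably many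
atoms their lengths add up to `1`, so they tile `[0, 1]` up to a null set. Mixing the uniform
laws on them with weights `p x` therefore gives the uniform law on `[0, 1]`. The Gaussian part is
the quantile transform: a right inverse of a cdf on `(0, 1)` pushes the uniform law to that
distribution.
-/

open MeasureTheory ProbabilityTheory Set Function

lemma measurable_measure_singleton {α : Type*} [MeasurableSpace α] [MeasurableEq α]
    (μ : Measure α) [SFinite μ] : Measurable fun x => μ {x} := by
  have hsingleton (x : α) : Prod.mk x ⁻¹' diagonal α = {x} := by
    ext
    simp [eq_comm]
  simpa only [hsingleton] using measurable_measure_prodMk_left (ν := μ) measurableSet_diagonal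

lemma restrict_Icc_setOf_sub_mul_le_mul_ofReal (a p t : ℝ) (hp : 0 ≤ p) :
    volume.restrict (Icc (0 : ℝ) 1) {u | a - u * p ≤ t} * ENNReal.ofReal p
      = volume (Ioc (a - p) a ∩ Iic t) := by
  rw [Ioc_inter_Iic, Real.volume_Ioc]
  rcases hp.eq_or_lt with rfl | hp
  · simp
  have hset : {u | a - u * p ≤ t} ∩ Icc 0 1 = Icc (max ((a - t) / p) 0) 1 := by
    ext u
    simp only [mem_inter_iff, mem_ofPred_eq, mem_Icc, max_le_iff, div_le_iff₀ hp]
    constructor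
    · rintro ⟨h, h0, h1⟩
      exact ⟨⟨by linarith, h0⟩, h1⟩
    · rintro ⟨⟨h, h0⟩, h1⟩
      exact ⟨by linarith, h0, h1⟩
  rw [Measure.restrict_apply' measurableSet_Icc, hset, Real.volume_Icc,
    ← ENNReal.ofReal_mul' hp.le]
  congr 1
  rw [sub_mul, one_mul, max_mul_of_nonneg _ _ hp.le, div_mul_cancel₀ _ hp.ne', zero_mul]
  rcases le_total a t with h | h
  · rw [inf_eq_left.mpr h, max_eq_right (by linarith)]; ring
  · rw [inf_eq_right.mpr h, max_eq_left (by linarith)]; ring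

section RandomizedCdf

variable (μ : Measure ℝ)

noncomputable def randomizedCdf (q : ℝ × ℝ) : ℝ := cdf μ q.1 - q.2 * μ.real {q.1}

lemma measurable_randomizedCdf [SFinite μ] : Measurable (randomizedCdf μ) :=
  ((monotone_cdf μ).measurable.comp measurable_fst).sub
    (measurable_snd.mul ((measurable_measure_singleton μ).ennreal_toReal.comp measurable_fst))

noncomputable def jumpInterval (x : ℝ) : Set ℝ := Ioc (cdf μ x - μ.real {x}) (cdf μ x)

variable [IsProbabilityMeasure μ]

lemma cdf_sub_measureReal_singleton (x : ℝ) : cdf μ x - μ.real {x} = μ.real (Iio x) := by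
  rw [cdf_eq_real, ← Iio_union_right, measureReal_union (by simp) (measurableSet_singleton x)]
  ring

lemma cdf_le_cdf_sub_measureReal_singleton {x y : ℝ} (hxy : x < y) :
    cdf μ x ≤ cdf μ y - μ.real {y} := by
  rw [cdf_eq_real, cdf_sub_measureReal_singleton]
  exact measureReal_mono fun z hz => lt_of_le_of_lt hz hxy

lemma pairwise_disjoint_jumpInterval : Pairwise (Disjoint on jumpInterval μ) := by
  intro x y hxy
  rcases Ne.lt_or_gt hxy with h | h
  · exact Ioc_disjoint_Ioc_of_le (cdf_le_cdf_sub_measureReal_singleton μ h)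
  · exact (Ioc_disjoint_Ioc_of_le (cdf_le_cdf_sub_measureReal_singleton μ h)).symm

lemma jumpInterval_subset_Icc (x : ℝ) : jumpInterval μ x ⊆ Icc 0 1 := by
  refine Ioc_subset_Icc_self.trans (Icc_subset_Icc ?_ (cdf_le_one μ x))
  rw [cdf_sub_measureReal_singleton]
  exact measureReal_nonneg

lemma volume_jumpInterval (x : ℝ) : volume (jumpInterval μ x) = μ {x} := by
  rw [jumpInterval, Real.volume_Ioc, sub_sub_cancel, ofReal_measureReal]

lemma biUnion_jumpInterval_ae_eq_Icc {S : Set ℝ} (hS : S.Countable) (hμS : μ Sᶜ = 0) :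
    (⋃ x ∈ S, jumpInterval μ x) =ᵐ[volume] Icc (0 : ℝ) 1 := by
  have hmeas : MeasurableSet (⋃ x ∈ S, jumpInterval μ x) :=
    MeasurableSet.biUnion hS fun _ _ => measurableSet_Ioc
  refine ae_eq_of_subset_of_measure_ge (iUnion₂_subset fun x _ => jumpInterval_subset_Icc μ x)
    (le_of_eq ?_) hmeas.nullMeasurableSet (by simp)
  calc volume (Icc (0 : ℝ) 1) = μ S := by
        rw [Real.volume_Icc, (prob_compl_eq_zero_iff hS.measurableSet).mp hμS]; simp
    _ = volume (⋃ x ∈ S, jumpInterval μ x) := by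
        conv_lhs => rw [← biUnion_of_singleton S]
        rw [measure_biUnion hS ((pairwise_disjoint_jumpInterval μ).set_pairwise S)
            fun _ _ => measurableSet_Ioc,
          measure_biUnion hS (fun _ _ _ _ h => disjoint_singleton.mpr h)
            fun _ _ => measurableSet_singleton _]
        simp_rw [volume_jumpInterval]

theorem map_prod_restrict_Icc_randomizedCdf {S : Set ℝ} (hS : S.Countable) (hμS : μ Sᶜ = 0) :
    (μ.prod (volume.restrict (Icc 0 1))).map (randomizedCdf μ) = volume.restrict (Icc 0 1) := by
  have : IsProbabilityMeasure (volume.restrict (Icc (0 : ℝ) 1)) := ⟨by simp⟩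
  have : IsProbabilityMeasure ((μ.prod (volume.restrict (Icc 0 1))).map (randomizedCdf μ)) :=
    Measure.isProbabilityMeasure_map (measurable_randomizedCdf μ).aemeasurable
  have hsum (f : ℝ → ENNReal) : ∫⁻ x, f x ∂μ = ∑' x : S, f x * μ {(x : ℝ)} := by
    rw [← lintegral_countable f hS, Measure.restrict_eq_self_of_ae_mem (ae_iff.mpr hμS)]
  refine Measure.ext_of_Iic _ _ fun t => ?_
  rw [Measure.map_apply (measurable_randomizedCdf μ) measurableSet_Iic,
    Measure.prod_apply (measurable_randomizedCdf μ measurableSet_Iic), hsum]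
  calc ∑' x : S, volume.restrict (Icc 0 1) (Prod.mk (x : ℝ) ⁻¹' (randomizedCdf μ ⁻¹' Iic t))
        * μ {(x : ℝ)}
      = ∑' x : S, volume (jumpInterval μ x ∩ Iic t) := by
        refine tsum_congr fun x => ?_
        rw [← ofReal_measureReal (μ := μ) (s := {(x : ℝ)})]
        exact restrict_Icc_setOf_sub_mul_le_mul_ofReal (cdf μ x) (μ.real {(x : ℝ)}) t
          measureReal_nonneg
    _ = volume ((⋃ x ∈ S, jumpInterval μ x) ∩ Iic t) := by
        rw [iUnion₂_inter, measure_biUnion hS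
          (fun _ _ _ _ h => (pairwise_disjoint_jumpInterval μ h).mono inter_subset_left
            inter_subset_left)
          fun _ _ => measurableSet_Ioc.inter measurableSet_Iic]
    _ = volume (Icc 0 1 ∩ Iic t) :=
        measure_congr (ae_eq_set_inter (biUnion_jumpInterval_ae_eq_Icc μ hS hμS) (ae_eq_refl _))
    _ = volume.restrict (Icc 0 1) (Iic t) := by
        rw [Measure.restrict_apply' measurableSet_Icc, inter_comm]

end RandomizedCdf

lemma map_restrict_Icc_eq_of_cdf_comp_eq_id (G : Measure ℝ) [IsProbabilityMeasure G] {Q : ℝ → ℝ}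
    (hQ : Measurable Q) (hcdfQ : ∀ p ∈ Ioo (0 : ℝ) 1, cdf G (Q p) = p) :
    (volume.restrict (Icc 0 1)).map Q = G := by
  have : IsProbabilityMeasure (volume.restrict (Icc (0 : ℝ) 1)) := ⟨by simp⟩
  have := Measure.isProbabilityMeasure_map (μ := volume.restrict (Icc (0 : ℝ) 1)) hQ.aemeasurable
  refine Measure.ext_of_Iic _ _ fun y => ?_
  rw [Measure.map_apply hQ measurableSet_Iic, ← Measure.restrict_congr_set Ioo_ae_eq_Icc,
    Measure.restrict_apply' measurableSet_Ioo, ← ofReal_cdf]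
  have hlower : Ioo 0 (cdf G y) ⊆ Q ⁻¹' Iic y ∩ Ioo 0 1 := fun p ⟨hp0, hpy⟩ => by
    have hp1 : p < 1 := hpy.trans_le (cdf_le_one G y)
    refine ⟨show Q p ≤ y from not_lt.mp fun hyQ => ?_, hp0, hp1⟩
    have := monotone_cdf G hyQ.le
    rw [hcdfQ p ⟨hp0, hp1⟩] at this
    linarith
  have hupper : Q ⁻¹' Iic y ∩ Ioo 0 1 ⊆ Ioc 0 (cdf G y) := fun p ⟨hpy, hp0, hp1⟩ =>
    ⟨hp0, hcdfQ p ⟨hp0, hp1⟩ ▸ monotone_cdf G hpy⟩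
  apply le_antisymm
  · simpa using measure_mono (μ := volume) hupper
  · simpa using measure_mono (μ := volume) hlower

theorem randomized_gaussianization_discrete_general
    {Ω : Type*} [MeasureSpace Ω] [IsProbabilityMeasure (ℙ : Measure Ω)]
    (X : Ω → ℝ) (hX : Measurable X) (hdiscrete : (Set.range X).Countable)
    (θ : Ω → ℝ) (hθ : Measurable θ)
    (hθunif : Measure.map θ ℙ = (volume : Measure ℝ).restrict (Set.Icc 0 1))
    (hindep : IndepFun X θ ℙ)
    (F : ℝ → ℝ) (hF : ∀ x, F x = cdf (Measure.map X ℙ) x)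
    (P : ℝ → ℝ) (hP : ∀ x, P x = (Measure.map X ℙ {x}).toReal)
    (Φinv : ℝ → ℝ) (hΦinvMeas : Measurable Φinv)
    (hΦinv : ∀ p ∈ Set.Ioo (0:ℝ) 1, cdf (gaussianReal 0 1) (Φinv p) = p) :
    Measure.map (fun ω => F (X ω) - θ ω * P (X ω)) ℙ
        = (volume : Measure ℝ).restrict (Set.Icc 0 1)
      ∧ Measure.map (fun ω => Φinv (F (X ω) - θ ω * P (X ω))) ℙ = gaussianReal 0 1 := by
  set μ := Measure.map X ℙ
  have : IsProbabilityMeasure μ := Measure.isProbabilityMeasure_map hX.aemeasurable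
  obtain rfl : F = cdf μ := funext hF
  obtain rfl : P = fun x => μ.real {x} := funext hP
  have hμS : μ (range X)ᶜ = 0 := by
    rw [Measure.map_apply hX hdiscrete.measurableSet.compl]
    simp
  have hjoint : Measure.map (fun ω => (X ω, θ ω)) ℙ = μ.prod (volume.restrict (Icc 0 1)) := by
    rw [← hθunif]
    exact (indepFun_iff_map_prod_eq_prod_map_map hX.aemeasurable hθ.aemeasurable).mp hindep
  have hU : Measurable fun ω => cdf μ (X ω) - θ ω * μ.real {X ω} :=
    (measurable_randomizedCdf μ).comp (hX.prodMk hθ)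
  have hunif : Measure.map (fun ω => cdf μ (X ω) - θ ω * μ.real {X ω}) ℙ
      = volume.restrict (Icc 0 1) := by
    rw [← map_prod_restrict_Icc_randomizedCdf μ hdiscrete hμS, ← hjoint,
      Measure.map_map (measurable_randomizedCdf μ) (hX.prodMk hθ)]
    rfl
  refine ⟨hunif, ?_⟩
  rw [← map_restrict_Icc_eq_of_cdf_comp_eq_id _ hΦinvMeas hΦinv, ← hunif,
    Measure.map_map hΦinvMeas hU]
  rfl

/-- Let `X` be a discrete real random variable with CDF `F` and probability mass
function `P`, and let `θ` be uniformly distributed on `[0,1]`, independent of `X`. Then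
`F(X) − θ·P(X)` is uniformly distributed on `[0,1]`, and consequently
`Φ⁻¹(F(X) − θ·P(X))` has the standard normal distribution. -/
theorem randomized_gaussianization_discrete
    {Ω : Type*} [MeasureSpace Ω] [IsProbabilityMeasure (ℙ : Measure Ω)]
    (X : Ω → ℝ) (hX : Measurable X) (hdiscrete : (Set.range X).Countable)
    (θ : Ω → ℝ) (hθ : Measurable θ)
    (hθunif : Measure.map θ ℙ = (volume : Measure ℝ).restrict (Set.Icc 0 1))
    (hindep : IndepFun X θ ℙ)
    (F : ℝ → ℝ) (hF : ∀ x, F x = cdf (Measure.map X ℙ) x)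
    (P : ℝ → ℝ) (hP : ∀ x, P x = (Measure.map X ℙ {x}).toReal)
    (Φinv : ℝ → ℝ) (hΦinvMeas : Measurable Φinv)
    (hΦinv : ∀ p ∈ Set.Ioo (0:ℝ) 1, cdf (gaussianReal 0 1) (Φinv p) = p)
    (hΦinvMono : StrictMonoOn Φinv (Set.Ioo (0:ℝ) 1)) :
    Measure.map (fun ω => F (X ω) - θ ω * P (X ω)) ℙ
        = (volume : Measure ℝ).restrict (Set.Icc 0 1)
      ∧ Measure.map (fun ω => Φinv (F (X ω) - θ ω * P (X ω))) ℙ = gaussianReal 0 1 :=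
  randomized_gaussianization_discrete_general X hX hdiscrete θ hθ hθunif hindep F hF P hP Φinv
    hΦinvMeas hΦinv
end

section
/- Let X̄ be a real random variable with continuous strictly increasing CDF F and finite second moment. Among all measurable maps φ with φ(X̄) ~ N(0,1), the mean-square error E[(φ(X̄) − X̄)²] is minimized by the monotone map φ*(x) = Φ⁻¹(F(x)), where Φ is the standard normal CDF. -/
/-!
Write `Z = T ∘ X̄` with `T = Φ⁻¹ ∘ F`. As `Φ` is strictly increasing and `Φ ∘ T = F`, `T` is
monotone, and `Z` is standard normal because `F(X̄)` is uniform. For any `Y = φ(X̄)` with the same law as `Z`, the squares `E[Y²]` and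
`E[Z²]` agree, so it suffices to show `E[Y X̄] ≤ E[Z X̄]`.

Put `D = Z - Y`, so `E[D] = 0`. Writing `X̄ = ∫ (1{t ≤ X̄} - 1{t ≤ 0}) dt` and using Fubini,
`E[D X̄] = ∫ E[D; X̄ ≥ t] dt`. For each `t`, the event `A = {X̄ ≥ t}` separates the values of `Z`
at `c = T t`: `Z ≥ c` on `A` and `Z ≤ c` off `A`. Hence
`E[Y - c; A] ≤ E[(Y - c)⁺] = E[(Z - c)⁺] = E[Z - c; A]`, so every integrand is nonnegative.
-/

open MeasureTheory ProbabilityTheory Set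

noncomputable def layer (a t : ℝ) : ℝ := (Ioc 0 a).indicator 1 t - (Ioc a 0).indicator 1 t

lemma layer_eq_ite (a t : ℝ) :
    layer a t = (if t ≤ a then 1 else 0) - (if t ≤ 0 then 1 else 0) := by
  simp only [layer, indicator_apply, mem_Ioc, Pi.one_apply]
  grind

lemma abs_layer (a t : ℝ) : |layer a t| = (uIoc 0 a).indicator 1 t := by
  simp only [layer, indicator_apply, uIoc, mem_Ioc, Pi.one_apply]
  grind

lemma measurable_layer : Measurable (Function.uncurry layer) := by
  unfold Function.uncurry
  simp_rw [layer_eq_ite]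
  exact (Measurable.ite (measurableSet_le measurable_snd measurable_fst) measurable_const
    measurable_const).sub (Measurable.ite (measurableSet_le measurable_snd measurable_const)
    measurable_const measurable_const)

lemma integrable_indicator_Ioc_one (a b : ℝ) : Integrable ((Ioc a b).indicator (1 : ℝ → ℝ)) :=
  (integrable_indicator_iff measurableSet_Ioc).2 (integrableOn_const (by simp))

lemma integrable_layer (a : ℝ) : Integrable (layer a) :=
  (integrable_indicator_Ioc_one 0 a).sub (integrable_indicator_Ioc_one a 0)

lemma integral_layer (a : ℝ) : ∫ t, layer a t = a := by
  unfold layer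
  rw [integral_sub (integrable_indicator_Ioc_one _ _) (integrable_indicator_Ioc_one _ _),
    integral_indicator_one measurableSet_Ioc, integral_indicator_one measurableSet_Ioc]
  simp only [measureReal_def, Real.volume_Ioc, ENNReal.toReal_ofReal', sub_zero, zero_sub]
  exact max_zero_sub_max_neg_zero_eq_self a

lemma integral_abs_layer (a : ℝ) : ∫ t, |layer a t| = |a| := by
  simp_rw [abs_layer, integral_indicator_one measurableSet_uIoc, measureReal_def,
    Real.volume_uIoc]
  simp

section Rearrangement

variable {Ω : Type*} [MeasurableSpace Ω] {μ : Measure Ω} {D X : Ω → ℝ}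

lemma integrable_mul_layer [SFinite μ] (hD : AEStronglyMeasurable D μ) (hX : Measurable X)
    (hDX : Integrable (fun ω ↦ D ω * X ω) μ) :
    Integrable (Function.uncurry fun ω t ↦ D ω * layer (X ω) t) (μ.prod volume) := by
  have hmeas : AEStronglyMeasurable (Function.uncurry fun ω t ↦ D ω * layer (X ω) t)
      (μ.prod volume) :=
    hD.comp_fst.mul (measurable_layer.comp ((hX.comp measurable_fst).prodMk
      measurable_snd)).aestronglyMeasurable
  refine (integrable_prod_iff hmeas).2
    ⟨ae_of_all _ fun ω ↦ (integrable_layer (X ω)).const_mul (D ω), ?_⟩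
  simpa [abs_mul, integral_const_mul, integral_abs_layer] using hDX.norm

lemma integral_mul_eq_integral_integral_mul_layer [SFinite μ] (hD : AEStronglyMeasurable D μ)
    (hX : Measurable X) (hDX : Integrable (fun ω ↦ D ω * X ω) μ) :
    ∫ ω, D ω * X ω ∂μ = ∫ t, ∫ ω, D ω * layer (X ω) t ∂μ := by
  have h (ω : Ω) : D ω * X ω = ∫ t, D ω * layer (X ω) t := by
    rw [integral_const_mul, integral_layer]
  simp_rw [h]
  exact integral_integral_swap (integrable_mul_layer hD hX hDX)

lemma integral_mul_layer_eq_setIntegral (hD : Integrable D μ) (hX : Measurable X)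
    (hD0 : ∫ ω, D ω ∂μ = 0) (t : ℝ) :
    ∫ ω, D ω * layer (X ω) t ∂μ = ∫ ω in {ω | t ≤ X ω}, D ω ∂μ := by
  have hA : MeasurableSet {ω | t ≤ X ω} := measurableSet_le measurable_const hX
  rw [← integral_indicator hA]
  by_cases ht : t ≤ 0
  · have h (ω : Ω) : D ω * layer (X ω) t = {ω | t ≤ X ω}.indicator D ω - D ω := by
      by_cases hω : t ≤ X ω <;> simp [layer_eq_ite, hω, ht]
    simp_rw [h]
    rw [integral_sub ((integrable_indicator_iff hA).2 hD.integrableOn) hD, hD0, sub_zero]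
  · congr 1 with ω
    by_cases hω : t ≤ X ω <;> simp [layer_eq_ite, hω, ht]

lemma setIntegral_le_setIntegral_of_identDistrib [IsFiniteMeasure μ] {Y Z : Ω → ℝ}
    (hYZ : IdentDistrib Y Z μ μ) (hZ : Integrable Z μ) {A : Set Ω} (hA : MeasurableSet A) {c : ℝ}
    (hZA : ∀ ω ∈ A, c ≤ Z ω) (hZAc : ∀ ω ∉ A, Z ω ≤ c) :
    ∫ ω in A, Y ω ∂μ ≤ ∫ ω in A, Z ω ∂μ := by
  have hY : Integrable Y μ := hYZ.integrable_iff.2 hZ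
  have hposY : Integrable (fun ω ↦ max (Y ω - c) 0) μ := (hY.sub (integrable_const c)).pos_part
  suffices ∫ ω in A, (Y ω - c) ∂μ ≤ ∫ ω in A, (Z ω - c) ∂μ by
    rwa [integral_sub hY.integrableOn (integrable_const c).integrableOn,
      integral_sub hZ.integrableOn (integrable_const c).integrableOn, sub_le_sub_iff_right] at this
  calc ∫ ω in A, (Y ω - c) ∂μ
      ≤ ∫ ω in A, max (Y ω - c) 0 ∂μ :=
        setIntegral_mono (hY.sub (integrable_const c)).integrableOn hposY.integrableOn
          fun ω ↦ le_max_left _ _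
    _ ≤ ∫ ω, max (Y ω - c) 0 ∂μ :=
        setIntegral_le_integral hposY (ae_of_all _ fun ω ↦ le_max_right _ _)
    _ = ∫ ω, max (Z ω - c) 0 ∂μ :=
        (hYZ.comp (u := fun y ↦ max (y - c) 0) (by fun_prop)).integral_eq
    _ = ∫ ω in A, max (Z ω - c) 0 ∂μ :=
        (setIntegral_eq_integral_of_forall_compl_eq_zero fun ω hω ↦
          max_eq_right (sub_nonpos.2 (hZAc ω hω))).symm
    _ = ∫ ω in A, (Z ω - c) ∂μ :=
        setIntegral_congr_fun hA fun ω hω ↦ max_eq_left (sub_nonneg.2 (hZA ω hω))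

theorem integral_mul_le_integral_comp_mul_of_monotone [IsFiniteMeasure μ] {Y : Ω → ℝ}
    {g : ℝ → ℝ} (hg : Monotone g) (hX : Measurable X) (hXL2 : MemLp X 2 μ) (hYL2 : MemLp Y 2 μ)
    (hY : IdentDistrib Y (g ∘ X) μ μ) :
    ∫ ω, Y ω * X ω ∂μ ≤ ∫ ω, g (X ω) * X ω ∂μ := by
  have hZL2 : MemLp (fun ω ↦ g (X ω)) 2 μ := hY.memLp_iff.1 hYL2
  have hY1 : Integrable Y μ := hYL2.integrable one_le_two
  have hZ1 : Integrable (fun ω ↦ g (X ω)) μ := hZL2.integrable one_le_two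
  have hD : Integrable (fun ω ↦ g (X ω) - Y ω) μ := hZ1.sub hY1
  have hD0 : ∫ ω, (g (X ω) - Y ω) ∂μ = 0 := by
    rw [integral_sub hZ1 hY1, sub_eq_zero]
    exact hY.integral_eq.symm
  have hDX : Integrable (fun ω ↦ (g (X ω) - Y ω) * X ω) μ := (hZL2.sub hYL2).integrable_mul hXL2
  have key : 0 ≤ ∫ ω, (g (X ω) - Y ω) * X ω ∂μ := by
    rw [integral_mul_eq_integral_integral_mul_layer hD.aestronglyMeasurable hX hDX]
    refine integral_nonneg fun t ↦ ?_
    change 0 ≤ _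
    rw [integral_mul_layer_eq_setIntegral hD hX hD0, integral_sub hZ1.integrableOn
      hY1.integrableOn, sub_nonneg]
    exact setIntegral_le_setIntegral_of_identDistrib hY hZ1 (measurableSet_le measurable_const hX)
      (fun ω hω ↦ hg hω) fun ω hω ↦ hg (not_le.1 hω).le
  have hZX : Integrable (fun ω ↦ g (X ω) * X ω) μ := hZL2.integrable_mul hXL2
  have hYX : Integrable (fun ω ↦ Y ω * X ω) μ := hYL2.integrable_mul hXL2
  simp_rw [sub_mul] at key
  rw [integral_sub hZX hYX] at key
  linarith

lemma integral_sub_sq [IsFiniteMeasure μ] {W : Ω → ℝ} (hW : MemLp W 2 μ) (hX : MemLp X 2 μ) :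
    ∫ ω, (W ω - X ω) ^ 2 ∂μ = ∫ ω, W ω ^ 2 ∂μ - 2 * ∫ ω, W ω * X ω ∂μ + ∫ ω, X ω ^ 2 ∂μ := by
  have hWX : Integrable (fun ω ↦ 2 * (W ω * X ω)) μ := (hW.integrable_mul hX).const_mul 2
  have hW2 : Integrable (fun ω ↦ W ω ^ 2 - 2 * (W ω * X ω)) μ := hW.integrable_sq.sub hWX
  have h (ω : Ω) : (W ω - X ω) ^ 2 = W ω ^ 2 - 2 * (W ω * X ω) + X ω ^ 2 := by ring
  simp_rw [h]
  rw [integral_add hW2 hX.integrable_sq, integral_sub hW.integrable_sq hWX, integral_const_mul]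

theorem integral_comp_sub_sq_le_of_monotone [IsFiniteMeasure μ] {Y : Ω → ℝ}
    {g : ℝ → ℝ} (hg : Monotone g) (hX : Measurable X) (hXL2 : MemLp X 2 μ) (hYL2 : MemLp Y 2 μ)
    (hY : IdentDistrib Y (g ∘ X) μ μ) :
    ∫ ω, (g (X ω) - X ω) ^ 2 ∂μ ≤ ∫ ω, (Y ω - X ω) ^ 2 ∂μ := by
  have hZL2 : MemLp (fun ω ↦ g (X ω)) 2 μ := hY.memLp_iff.1 hYL2
  have hsq : ∫ ω, Y ω ^ 2 ∂μ = ∫ ω, g (X ω) ^ 2 ∂μ :=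
    (hY.comp (u := fun y ↦ y ^ 2) (by fun_prop)).integral_eq
  rw [integral_sub_sq hZL2 hXL2, integral_sub_sq hYL2 hXL2, hsq]
  linarith [integral_mul_le_integral_comp_mul_of_monotone hg hX hXL2 hYL2 hY]

end Rearrangement

namespace ProbabilityTheory

variable {μ ν : Measure ℝ}

lemma strictMono_cdf_of_absolutelyContinuous [IsProbabilityMeasure μ] (h : volume ≪ μ) :
    StrictMono (cdf μ) := by
  intro a b hab
  have hpos : μ (Ioc a b) ≠ 0 := fun h0 ↦ hab.not_ge (by simpa using h h0)
  rw [← measure_cdf μ, StieltjesFunction.measure_Ioc, ne_eq, ENNReal.ofReal_eq_zero,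
    not_le, sub_pos] at hpos
  exact hpos

lemma cdf_mem_Ioo_of_strictMono (h : StrictMono (cdf μ)) (x : ℝ) : cdf μ x ∈ Ioo 0 1 :=
  ⟨(cdf_nonneg μ (x - 1)).trans_lt (h (sub_one_lt x)),
    (h (lt_add_one x)).trans_le (cdf_le_one μ (x + 1))⟩

lemma exists_cdf_eq_of_continuous (h : Continuous (cdf μ)) {p : ℝ} (hp : p ∈ Ioo 0 1) :
    ∃ x, cdf μ x = p := by
  obtain ⟨a, ha⟩ := ((tendsto_cdf_atBot μ).eventually_lt_const hp.1).exists
  obtain ⟨b, hb⟩ := ((tendsto_cdf_atTop μ).eventually_const_lt hp.2).exists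
  exact intermediate_value_univ a b h ⟨ha.le, hb.le⟩

lemma monotone_of_cdf_comp_eq (hν : StrictMono (cdf ν)) {T : ℝ → ℝ}
    (hT : ∀ x, cdf ν (T x) = cdf μ x) : Monotone T :=
  fun x y hxy ↦ hν.le_iff_le.1 (by rw [hT, hT]; exact (cdf μ).mono hxy)

lemma map_eq_of_cdf_comp_eq [IsProbabilityMeasure μ] [IsProbabilityMeasure ν]
    (hμc : Continuous (cdf μ)) (hμ : StrictMono (cdf μ)) (hν : StrictMono (cdf ν)) {T : ℝ → ℝ}
    (hT : ∀ x, cdf ν (T x) = cdf μ x) :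
    μ.map T = ν := by
  refine Measure.ext_of_Iic _ _ fun a ↦ ?_
  obtain ⟨x, hx⟩ := exists_cdf_eq_of_continuous hμc (cdf_mem_Ioo_of_strictMono hν a)
  have hpre : T ⁻¹' Iic a = Iic x := by
    ext y
    rw [mem_preimage, mem_Iic, mem_Iic, ← hν.le_iff_le, hT, ← hx, hμ.le_iff_le]
  rw [Measure.map_apply (monotone_of_cdf_comp_eq hν hT).measurable measurableSet_Iic, hpre,
    ← ofReal_cdf, ← ofReal_cdf, hx]

end ProbabilityTheory

theorem optimal_gaussian_transport_map_general
    {Ω : Type*} [MeasureSpace Ω] [IsProbabilityMeasure (ℙ : Measure Ω)]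
    (Xb : Ω → ℝ) (hXb : Measurable Xb) (hL2 : MemLp Xb 2 (ℙ : Measure Ω))
    (F : ℝ → ℝ) (hF : ∀ x, F x = cdf (Measure.map Xb ℙ) x)
    (hFcont : Continuous F) (hFmono : StrictMono F)
    (Φinv : ℝ → ℝ)
    (hΦinv : ∀ p ∈ Set.Ioo (0:ℝ) 1, cdf (gaussianReal 0 1) (Φinv p) = p) :
    ∀ φ : ℝ → ℝ, Measurable φ →
      Measure.map (fun ω => φ (Xb ω)) ℙ = gaussianReal 0 1 →
      MemLp (fun ω => φ (Xb ω)) 2 (ℙ : Measure Ω) →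
      (∫ ω, (Φinv (F (Xb ω)) - Xb ω)^2) ≤ ∫ ω, (φ (Xb ω) - Xb ω)^2 := by
  intro φ hφ hφmap hφL2
  set ν : Measure ℝ := Measure.map Xb ℙ
  have : IsProbabilityMeasure ν := Measure.isProbabilityMeasure_map hXb.aemeasurable
  obtain rfl : F = cdf ν := funext hF
  have hΦ : StrictMono (cdf (gaussianReal 0 1)) :=
    strictMono_cdf_of_absolutelyContinuous (gaussianReal_absolutelyContinuous' 0 one_ne_zero)
  have hT (x : ℝ) : cdf (gaussianReal 0 1) (Φinv (cdf ν x)) = cdf ν x :=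
    hΦinv _ (cdf_mem_Ioo_of_strictMono hFmono x)
  have hTmono : Monotone fun x ↦ Φinv (cdf ν x) := monotone_of_cdf_comp_eq hΦ hT
  have hTmap : Measure.map ((fun x ↦ Φinv (cdf ν x)) ∘ Xb) ℙ = gaussianReal 0 1 := by
    rw [← Measure.map_map hTmono.measurable hXb]
    exact map_eq_of_cdf_comp_eq hFcont hFmono hΦ hT
  exact integral_comp_sub_sq_le_of_monotone hTmono hXb hL2 hφL2
    ⟨(hφ.comp hXb).aemeasurable, (hTmono.measurable.comp hXb).aemeasurable, hφmap.trans hTmap.symm⟩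

/-- Let `X̄` be a real random variable with continuous strictly increasing CDF `F`
and finite second moment.  Among all measurable maps `φ` with `φ(X̄) ~ N(0,1)`, the mean-square
error `E[(φ(X̄) − X̄)²]` is minimized by the monotone map `φ*(x) = Φ⁻¹(F(x))`, where `Φ` is the
standard normal CDF. -/
theorem optimal_gaussian_transport_map
    {Ω : Type*} [MeasureSpace Ω] [IsProbabilityMeasure (ℙ : Measure Ω)]
    (Xb : Ω → ℝ) (hXb : Measurable Xb) (hL2 : MemLp Xb 2 (ℙ : Measure Ω))
    (F : ℝ → ℝ) (hF : ∀ x, F x = cdf (Measure.map Xb ℙ) x)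
    (hFcont : Continuous F) (hFmono : StrictMono F)
    (Φinv : ℝ → ℝ) (hΦinvMeas : Measurable Φinv)
    (hΦinv : ∀ p ∈ Set.Ioo (0:ℝ) 1, cdf (gaussianReal 0 1) (Φinv p) = p)
    (hΦinvMono : StrictMonoOn Φinv (Set.Ioo (0:ℝ) 1)) :
    ∀ φ : ℝ → ℝ, Measurable φ →
      Measure.map (fun ω => φ (Xb ω)) ℙ = gaussianReal 0 1 →
      MemLp (fun ω => φ (Xb ω)) 2 (ℙ : Measure Ω) →
      (∫ ω, (Φinv (F (Xb ω)) - Xb ω)^2) ≤ ∫ ω, (φ (Xb ω) - Xb ω)^2 :=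
  optimal_gaussian_transport_map_general Xb hXb hL2 F hF hFcont hFmono Φinv hΦinv
end

section
/- Data processing lemma for the IB curve: for any measurable maps φ, ψ and any constraint level Ĩ_Y, the minimum of I(T;X) over Markov kernels T←X subject to I(T;Y) ≥ Ĩ_Y is less than or equal to the corresponding minimum with (X,Y) replaced by (φ(X),ψ(Y)); equivalently, the IB tradeoff curve of (φ(X),ψ(Y)) lies below (is dominated by) that of (X,Y). -/
open MeasureTheory ProbabilityTheory
open scoped ENNReal Classical

lemma pt_neg (a : ℝ≥0∞) (ha : a ≠ ⊤) :
    a * ENNReal.ofReal (max (-Real.log a.toReal) 0) ≤ 1 - a := by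
  rcases eq_or_ne a 0 with rfl | h0
  · simp
  have ht : 0 < a.toReal := ENNReal.toReal_pos h0 ha
  set t := a.toReal with htdef
  have hae : a = ENNReal.ofReal t := (ENNReal.ofReal_toReal ha).symm
  rcases le_or_gt 1 t with h1 | h1
  · have hm : max (-Real.log t) 0 = 0 := max_eq_right (by simpa using Real.log_nonneg h1)
    simp [hm]
  · have hinv : Real.log t⁻¹ ≤ t⁻¹ - 1 := Real.log_le_sub_one_of_pos (by positivity)
    have hlog : -Real.log t ≤ t⁻¹ - 1 := by rwa [← Real.log_inv]
    have h0i : (0:ℝ) ≤ t⁻¹ - 1 := by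
      nlinarith [mul_inv_cancel₀ (ne_of_gt ht)]
    have hmax : max (-Real.log t) 0 ≤ t⁻¹ - 1 := max_le hlog h0i
    have hmul : t * max (-Real.log t) 0 ≤ 1 - t := by
      have := mul_le_mul_of_nonneg_left hmax ht.le
      have ht1 : t * (t⁻¹ - 1) = 1 - t := by
        field_simp
      linarith [this, ht1 ▸ this]
    calc a * ENNReal.ofReal (max (-Real.log t) 0)
        = ENNReal.ofReal (t * max (-Real.log t) 0) := by
          rw [hae, ← ENNReal.ofReal_mul ht.le]
      _ ≤ ENNReal.ofReal (1 - t) := ENNReal.ofReal_le_ofReal hmul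
      _ = 1 - a := by rw [hae, ← ENNReal.ofReal_one, ← ENNReal.ofReal_sub _ ht.le]
lemma pt_neg' (a : ℝ≥0∞) : a * ENNReal.ofReal (max (-Real.log a.toReal) 0) ≤ 1 := by
  rcases eq_or_ne a ⊤ with rfl | ha
  · simp
  · exact (pt_neg a ha).trans tsub_le_self

lemma pt_pos (a : ℝ≥0∞) (ha : a ≠ ⊤) :
    a - 1 ≤ a * ENNReal.ofReal (max (Real.log a.toReal) 0) := by
  rcases le_or_gt a 1 with h1 | h1
  · simp [tsub_eq_zero_of_le h1]
  have h0 : a ≠ 0 := by intro h; simp [h] at h1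
  set t := a.toReal with htdef
  have ht1 : 1 < t := by
    have := (ENNReal.toReal_lt_toReal (by simp) ha).2 h1
    simpa using this
  have hlg : (t - 1) ≤ t * Real.log t := by
    have hinv : Real.log t⁻¹ ≤ t⁻¹ - 1 := Real.log_le_sub_one_of_pos (by positivity)
    rw [Real.log_inv] at hinv
    have htp : (0:ℝ) < t := by linarith
    nlinarith [mul_le_mul_of_nonneg_left hinv htp.le, mul_inv_cancel₀ (ne_of_gt htp)]
  have hmax : max (Real.log t) 0 = Real.log t := max_eq_left (Real.log_nonneg ht1.le)
  have hae : a = ENNReal.ofReal t := (ENNReal.ofReal_toReal ha).symm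
  calc a - 1 = ENNReal.ofReal (t - 1) := by
        rw [hae, ← ENNReal.ofReal_one, ← ENNReal.ofReal_sub _ zero_le_one]
    _ ≤ ENNReal.ofReal (t * Real.log t) := ENNReal.ofReal_le_ofReal hlg
    _ = a * ENNReal.ofReal (max (Real.log t) 0) := by
        rw [hmax, hae, ← ENNReal.ofReal_mul (by linarith)]

section
variable {α : Type*} [MeasurableSpace α]

lemma lintegral_comp_density (p q : Measure α) [SigmaFinite p] [SigmaFinite q]
    (hac : p ≪ q) {Φ : ℝ≥0∞ → ℝ≥0∞} (hΦ : Measurable Φ) :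
    ∫⁻ x, Φ (p.rnDeriv q x) ∂p = ∫⁻ x, p.rnDeriv q x * Φ (p.rnDeriv q x) ∂q := by
  have h2 := lintegral_withDensity_eq_lintegral_mul q (Measure.measurable_rnDeriv p q)
    (hΦ.comp (Measure.measurable_rnDeriv p q))
  rw [Measure.withDensity_rnDeriv_eq p q hac] at h2
  exact h2

lemma measurable_Phi1 : Measurable (fun a : ℝ≥0∞ => ENNReal.ofReal (max (-Real.log a.toReal) 0)) :=
  ENNReal.measurable_ofReal.comp
    (((Real.measurable_log.comp ENNReal.measurable_toReal).neg).max measurable_const)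

lemma measurable_Phi2 : Measurable (fun a : ℝ≥0∞ => ENNReal.ofReal (max (Real.log a.toReal) 0)) :=
  ENNReal.measurable_ofReal.comp
    ((Real.measurable_log.comp ENNReal.measurable_toReal).max measurable_const)

lemma NL (p q : Measure α) [IsProbabilityMeasure p] [IsProbabilityMeasure q] (hac : p ≪ q) :
    ∫⁻ x, ENNReal.ofReal (max (-llr p q x) 0) ∂p ≤ 1 := by
  have h1 : ∫⁻ x, ENNReal.ofReal (max (-llr p q x) 0) ∂p
      = ∫⁻ x, p.rnDeriv q x * ENNReal.ofReal (max (-Real.log ((p.rnDeriv q x)).toReal) 0) ∂q :=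
    lintegral_comp_density p q hac measurable_Phi1
  rw [h1]
  calc ∫⁻ x, p.rnDeriv q x * ENNReal.ofReal (max (-Real.log ((p.rnDeriv q x)).toReal) 0) ∂q
      ≤ ∫⁻ _x, 1 ∂q := lintegral_mono fun x => pt_neg' _
    _ = 1 := by simp

lemma NL_int (p q : Measure α) [IsProbabilityMeasure p] [IsProbabilityMeasure q] (hac : p ≪ q) :
    Integrable (fun x => max (-llr p q x) 0) p := by
  refine ⟨((measurable_llr p q).neg.max measurable_const).aestronglyMeasurable, ?_⟩
  refine (hasFiniteIntegral_iff_ofReal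
    (Filter.Eventually.of_forall fun x => le_max_right _ _)).mpr ?_
  exact lt_of_le_of_lt (NL p q hac) ENNReal.one_lt_top

lemma NN (p q : Measure α) [IsProbabilityMeasure p] [IsProbabilityMeasure q] (hac : p ≪ q)
    (hint : Integrable (llr p q) p) : 0 ≤ ∫ x, llr p q x ∂p := by
  set n : α → ℝ := fun x => max (-llr p q x) 0 with hn_def
  set pp : α → ℝ := fun x => max (llr p q x) 0 with hpp_def
  have hpp : Integrable pp p := hint.pos_part
  have hn : Integrable n p := hint.neg.pos_part
  have hsplit : ∀ x, llr p q x = pp x - n x := by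
    intro x
    rcases le_total 0 (llr p q x) with h | h
    · rw [hpp_def, hn_def]; simp only
      rw [max_eq_left h, max_eq_right (neg_nonpos.mpr h), sub_zero]
    · rw [hpp_def, hn_def]; simp only
      rw [max_eq_right h, max_eq_left (neg_nonneg.mpr h)]; ring
  have hint_eq : ∫ x, llr p q x ∂p = ∫ x, pp x ∂p - ∫ x, n x ∂p := by
    rw [← integral_sub hpp hn]
    exact integral_congr_ae (Filter.Eventually.of_forall hsplit)
  rw [hint_eq, sub_nonneg]
  -- reduce to lintegral comparison
  set A := ∫⁻ x, ENNReal.ofReal (n x) ∂p with hA_def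
  set B := ∫⁻ x, ENNReal.ofReal (pp x) ∂p with hB_def
  have hn_eq : ∫ x, n x ∂p = A.toReal :=
    integral_eq_lintegral_of_nonneg_ae (Filter.Eventually.of_forall fun x => le_max_right _ _)
      hn.aestronglyMeasurable
  have hpp_eq : ∫ x, pp x ∂p = B.toReal :=
    integral_eq_lintegral_of_nonneg_ae (Filter.Eventually.of_forall fun x => le_max_right _ _)
      hpp.aestronglyMeasurable
  have hB_fin : B ≠ ⊤ := by
    have := hpp.2
    exact ne_of_lt ((hasFiniteIntegral_iff_ofReal
      (Filter.Eventually.of_forall fun x => le_max_right _ _)).mp this)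
  have hd_ne : ∀ᵐ x ∂q, p.rnDeriv q x ≠ ⊤ :=
    (Measure.rnDeriv_lt_top p q).mono fun x hx => hx.ne
  have hA_den : A = ∫⁻ x, p.rnDeriv q x
      * ENNReal.ofReal (max (-Real.log ((p.rnDeriv q x)).toReal) 0) ∂q :=
    lintegral_comp_density p q hac measurable_Phi1
  have hB_den : B = ∫⁻ x, p.rnDeriv q x
      * ENNReal.ofReal (max (Real.log ((p.rnDeriv q x)).toReal) 0) ∂q :=
    lintegral_comp_density p q hac measurable_Phi2
  have hmin_meas : Measurable fun x => min (p.rnDeriv q x) 1 :=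
    (Measure.measurable_rnDeriv p q).min measurable_const
  have hmin_fin : ∫⁻ x, min (p.rnDeriv q x) 1 ∂q ≠ ⊤ := by
    refine ne_of_lt (lt_of_le_of_lt (lintegral_mono fun x => min_le_right _ _) ?_)
    simp [ENNReal.one_lt_top]
  have hmid1 : ∫⁻ x, (1 - p.rnDeriv q x) ∂q
      = 1 - ∫⁻ x, min (p.rnDeriv q x) 1 ∂q := by
    have hptw : ∀ x, (1:ℝ≥0∞) - p.rnDeriv q x = 1 - min (p.rnDeriv q x) 1 := by
      intro x
      rcases le_total (p.rnDeriv q x) 1 with h | h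
      · rw [min_eq_left h]
      · rw [min_eq_right h, tsub_eq_zero_of_le h, tsub_self]
    calc ∫⁻ x, (1 - p.rnDeriv q x) ∂q = ∫⁻ x, ((fun _ => (1:ℝ≥0∞)) x - min (p.rnDeriv q x) 1) ∂q :=
          lintegral_congr hptw
      _ = ∫⁻ _x, (1:ℝ≥0∞) ∂q - ∫⁻ x, min (p.rnDeriv q x) 1 ∂q :=
          lintegral_sub hmin_meas hmin_fin (Filter.Eventually.of_forall fun x => min_le_right _ _)
      _ = 1 - ∫⁻ x, min (p.rnDeriv q x) 1 ∂q := by simp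
  have hmid2 : ∫⁻ x, (p.rnDeriv q x - 1) ∂q
      = 1 - ∫⁻ x, min (p.rnDeriv q x) 1 ∂q := by
    have hptw : ∀ x, p.rnDeriv q x - 1 = p.rnDeriv q x - min (p.rnDeriv q x) 1 := by
      intro x
      rcases le_total (p.rnDeriv q x) 1 with h | h
      · rw [min_eq_left h, tsub_eq_zero_of_le h, tsub_self]
      · rw [min_eq_right h]
    have hlrd : ∫⁻ x, p.rnDeriv q x ∂q = 1 := by
      rw [Measure.lintegral_rnDeriv hac]; simp
    calc ∫⁻ x, (p.rnDeriv q x - 1) ∂q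
        = ∫⁻ x, (p.rnDeriv q x - min (p.rnDeriv q x) 1) ∂q := lintegral_congr hptw
      _ = ∫⁻ x, p.rnDeriv q x ∂q - ∫⁻ x, min (p.rnDeriv q x) 1 ∂q :=
          lintegral_sub hmin_meas hmin_fin (Filter.Eventually.of_forall fun x => min_le_left _ _)
      _ = 1 - ∫⁻ x, min (p.rnDeriv q x) 1 ∂q := by rw [hlrd]
  have hAB : A ≤ B := by
    rw [hA_den, hB_den]
    calc ∫⁻ x, p.rnDeriv q x * ENNReal.ofReal (max (-Real.log ((p.rnDeriv q x)).toReal) 0) ∂q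
        ≤ ∫⁻ x, (1 - p.rnDeriv q x) ∂q := by
          refine lintegral_mono_ae (hd_ne.mono fun x hx => ?_)
          exact pt_neg _ hx
      _ = ∫⁻ x, (p.rnDeriv q x - 1) ∂q := by rw [hmid1, hmid2]
      _ ≤ ∫⁻ x, p.rnDeriv q x * ENNReal.ofReal (max (Real.log ((p.rnDeriv q x)).toReal) 0) ∂q := by
          refine lintegral_mono_ae (hd_ne.mono fun x hx => ?_)
          exact pt_pos _ hx
  rw [hn_eq, hpp_eq]
  exact ENNReal.toReal_mono hB_fin hAB

end

/-- Kullback–Leibler divergence, `∞` when undefined. -/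
noncomputable def klDivE {E : Type*} [MeasurableSpace E] (μ ν : Measure E) : ℝ≥0∞ :=
  if μ ≪ ν ∧ Integrable (fun x => Real.log ((μ.rnDeriv ν x).toReal)) μ
  then ENNReal.ofReal (∫ x, Real.log ((μ.rnDeriv ν x).toReal) ∂μ) else ⊤

lemma klDivE_map_le {Ω Ω' : Type*} [MeasurableSpace Ω] [MeasurableSpace Ω']
    (ρ σ : Measure Ω) [IsProbabilityMeasure ρ] [IsProbabilityMeasure σ]
    {F : Ω → Ω'} (hF : Measurable F) :
    klDivE (ρ.map F) (σ.map F) ≤ klDivE ρ σ := by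
  by_cases hc : ρ ≪ σ ∧ Integrable (fun x => Real.log ((ρ.rnDeriv σ x).toReal)) ρ
  · obtain ⟨hac, hint0⟩ := hc
    have hint : Integrable (llr ρ σ) ρ := hint0
    haveI : IsProbabilityMeasure (ρ.map F) := Measure.isProbabilityMeasure_map hF.aemeasurable
    haveI : IsProbabilityMeasure (σ.map F) := Measure.isProbabilityMeasure_map hF.aemeasurable
    set ρ' := ρ.map F with hρ'
    set σ' := σ.map F with hσ'
    have hac' : ρ' ≪ σ' := hac.map hF
    set g := ρ'.rnDeriv σ' with hg_def
    have hg : Measurable g := Measure.measurable_rnDeriv _ _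
    have hgF : Measurable (g ∘ F) := hg.comp hF
    set m := σ.withDensity (g ∘ F) with hm_def
    haveI : IsProbabilityMeasure m := by
      constructor
      rw [hm_def, withDensity_apply _ MeasurableSet.univ, Measure.restrict_univ]
      have : ∫⁻ x, (g ∘ F) x ∂σ = ∫⁻ y, g y ∂σ' := (lintegral_map hg hF).symm
      rw [this, Measure.lintegral_rnDeriv hac']
      simp
    have hmσ : m ≪ σ := withDensity_absolutelyContinuous σ _
    have hZ : MeasurableSet {y : Ω' | g y = 0} := hg (measurableSet_singleton 0)
    have hρm : ρ ≪ m := by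
      refine Measure.AbsolutelyContinuous.mk fun N hN hmN => ?_
      have hsplit : ρ N ≤ ρ (F ⁻¹' {y | g y = 0}) + ρ (N ∩ F ⁻¹' {y | g y = 0}ᶜ) := by
        calc ρ N ≤ ρ ((N ∩ F ⁻¹' {y | g y = 0}) ∪ (N ∩ F ⁻¹' {y | g y = 0}ᶜ)) := by
              apply measure_mono; intro x hx
              by_cases hgx : g (F x) = 0
              · exact Or.inl ⟨hx, hgx⟩
              · exact Or.inr ⟨hx, hgx⟩
          _ ≤ ρ (N ∩ F ⁻¹' {y | g y = 0}) + ρ (N ∩ F ⁻¹' {y | g y = 0}ᶜ) := measure_union_le _ _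
          _ ≤ ρ (F ⁻¹' {y | g y = 0}) + ρ (N ∩ F ⁻¹' {y | g y = 0}ᶜ) := by
              gcongr; exact Set.inter_subset_right
      have h1 : ρ (F ⁻¹' {y | g y = 0}) = 0 := by
        have : ρ (F ⁻¹' {y | g y = 0}) = ρ' {y | g y = 0} := (Measure.map_apply hF hZ).symm
        rw [this, ← Measure.setLIntegral_rnDeriv hac' {y | g y = 0}]
        rw [setLIntegral_congr_fun_ae hZ (Filter.Eventually.of_forall fun y hy => hy)]
        simp
      have h2 : ρ (N ∩ F ⁻¹' {y | g y = 0}ᶜ) = 0 := by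
        refine hac ?_
        have hml : m N = ∫⁻ x in N, (g ∘ F) x ∂σ := withDensity_apply _ hN
        rw [hmN] at hml
        have hae : ∀ᵐ x ∂(σ.restrict N), (g ∘ F) x = 0 :=
          (lintegral_eq_zero_iff hgF).mp hml.symm
        have : (σ.restrict N) {x | g (F x) ≠ 0} = 0 := hae
        have hS : MeasurableSet {x | g (F x) ≠ 0} := (hgF (measurableSet_singleton 0)).compl
        have h0 : (σ.restrict N) {x | g (F x) ≠ 0} = 0 := hae
        rw [Measure.restrict_apply hS] at h0
        refine measure_mono_null ?_ h0
        intro x hx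
        exact ⟨hx.2, hx.1⟩
      refine le_antisymm ?_ (zero_le)
      calc ρ N ≤ _ := hsplit
        _ ≤ 0 := by rw [h1, h2, add_zero]
    -- a.e. decomposition
    have hchain : ρ.rnDeriv m * m.rnDeriv σ =ᵐ[σ] ρ.rnDeriv σ := Measure.rnDeriv_mul_rnDeriv hρm
    have hmd : m.rnDeriv σ =ᵐ[σ] g ∘ F := Measure.rnDeriv_withDensity σ hgF
    have hprod : ρ.rnDeriv σ =ᵐ[σ] fun x => ρ.rnDeriv m x * g (F x) := by
      filter_upwards [hchain, hmd] with x h1 h2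
      rw [← h1]; simp only [Pi.mul_apply, h2]; rfl
    have hprodρ : ∀ᵐ x ∂ρ, ρ.rnDeriv σ x = ρ.rnDeriv m x * g (F x) := hprod.filter_mono hac.ae_le
    have hpos1 : ∀ᵐ x ∂ρ, 0 < ρ.rnDeriv m x := Measure.rnDeriv_pos hρm
    have hfin1 : ∀ᵐ x ∂ρ, ρ.rnDeriv m x < ⊤ :=
      (Measure.rnDeriv_lt_top ρ m).filter_mono hρm.ae_le
    have hposg' : ∀ᵐ y ∂ρ', 0 < g y := Measure.rnDeriv_pos hac'
    have hfing' : ∀ᵐ y ∂ρ', g y < ⊤ := (Measure.rnDeriv_lt_top ρ' σ').filter_mono hac'.ae_le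
    have hposg : ∀ᵐ x ∂ρ, 0 < g (F x) := ae_of_ae_map hF.aemeasurable hposg'
    have hfing : ∀ᵐ x ∂ρ, g (F x) < ⊤ := ae_of_ae_map hF.aemeasurable hfing'
    set L : Ω → ℝ := fun x => Real.log ((g (F x)).toReal) with hL_def
    have hL_meas : Measurable L :=
      Real.measurable_log.comp (ENNReal.measurable_toReal.comp hgF)
    have hdecomp : ∀ᵐ x ∂ρ, llr ρ σ x = llr ρ m x + L x := by
      filter_upwards [hprodρ, hpos1, hfin1, hposg, hfing] with x hx h1 h2 h3 h4
      have ht1 : 0 < (ρ.rnDeriv m x).toReal := ENNReal.toReal_pos h1.ne' h2.ne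
      have ht2 : 0 < (g (F x)).toReal := ENNReal.toReal_pos h3.ne' h4.ne
      rw [llr, llr, hx, ENNReal.toReal_mul, Real.log_mul ht1.ne' ht2.ne']
    -- integrability of L
    have hNL' := NL ρ' σ' hac'
    have hLneg : ∫⁻ x, ENNReal.ofReal (max (-L x) 0) ∂ρ ≤ 1 := by
      have heq : (∫⁻ y, ENNReal.ofReal (max (-llr ρ' σ' y) 0) ∂ρ')
          = ∫⁻ x, ENNReal.ofReal (max (-L x) 0) ∂ρ :=
        lintegral_map (ENNReal.measurable_ofReal.comp
          (((measurable_llr ρ' σ').neg).max measurable_const)) hF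
      rw [← heq]; exact hNL'
    have hN2 : Integrable (fun x => max (-llr ρ m x) 0) ρ := NL_int ρ m hρm
    have hNLm := NL ρ m hρm
    have hLint : Integrable L ρ := by
      refine ⟨hL_meas.aestronglyMeasurable, ?_⟩
      have habs : ∀ x : Ω, (‖L x‖₊ : ℝ≥0∞)
          = ENNReal.ofReal (max (L x) 0) + ENNReal.ofReal (max (-L x) 0) := by
        intro x
        rw [← ENNReal.ofReal_add (le_max_right _ _) (le_max_right _ _)]
        rw [← enorm_eq_nnnorm, Real.enorm_eq_ofReal_abs]
        congr 1
        rcases le_total 0 (L x) with h | h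
        · rw [abs_of_nonneg h, max_eq_left h, max_eq_right (neg_nonpos.mpr h), add_zero]
        · rw [abs_of_nonpos h, max_eq_right h, max_eq_left (neg_nonneg.mpr h), zero_add]
      have hupper : ∀ᵐ x ∂ρ, ENNReal.ofReal (max (L x) 0)
          ≤ ENNReal.ofReal (max (llr ρ σ x) 0) + ENNReal.ofReal (max (-llr ρ m x) 0) := by
        filter_upwards [hdecomp] with x hx
        rw [← ENNReal.ofReal_add (le_max_right _ _) (le_max_right _ _)]
        refine ENNReal.ofReal_le_ofReal ?_
        have hL : L x = llr ρ σ x - llr ρ m x := by linarith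
        have h1 : L x ≤ max (llr ρ σ x) 0 + max (-llr ρ m x) 0 := by
          rw [hL]
          have := le_max_left (llr ρ σ x) 0
          have := le_max_left (-llr ρ m x) 0
          linarith
        exact max_le h1 (by positivity)
      have hmeas_n : Measurable fun x => ENNReal.ofReal (max (-L x) 0) :=
        ENNReal.measurable_ofReal.comp ((hL_meas.neg).max measurable_const)
      have hfin_pos : ∫⁻ x, ENNReal.ofReal (max (L x) 0) ∂ρ < ⊤ := by
        have hintpp : Integrable (fun x => max (llr ρ σ x) 0) ρ := hint.pos_part
        have hfin1 : ∫⁻ x, ENNReal.ofReal (max (llr ρ σ x) 0) ∂ρ < ⊤ :=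
          (hasFiniteIntegral_iff_ofReal
            (Filter.Eventually.of_forall fun x => le_max_right _ _)).mp hintpp.2
        calc ∫⁻ x, ENNReal.ofReal (max (L x) 0) ∂ρ
            ≤ ∫⁻ x, (ENNReal.ofReal (max (llr ρ σ x) 0)
                + ENNReal.ofReal (max (-llr ρ m x) 0)) ∂ρ := lintegral_mono_ae hupper
          _ = ∫⁻ x, ENNReal.ofReal (max (llr ρ σ x) 0) ∂ρ
                + ∫⁻ x, ENNReal.ofReal (max (-llr ρ m x) 0) ∂ρ :=
              lintegral_add_left (ENNReal.measurable_ofReal.comp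
                (((measurable_llr ρ σ)).max measurable_const)) _
          _ < ⊤ := by
              refine ENNReal.add_lt_top.mpr ⟨hfin1, lt_of_le_of_lt hNLm ENNReal.one_lt_top⟩
      have : ∫⁻ x, (‖L x‖₊ : ℝ≥0∞) ∂ρ < ⊤ := by
        calc ∫⁻ x, (‖L x‖₊ : ℝ≥0∞) ∂ρ
            = ∫⁻ x, (ENNReal.ofReal (max (L x) 0) + ENNReal.ofReal (max (-L x) 0)) ∂ρ :=
              lintegral_congr habs
          _ = ∫⁻ x, ENNReal.ofReal (max (L x) 0) ∂ρ
                + ∫⁻ x, ENNReal.ofReal (max (-L x) 0) ∂ρ :=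
              lintegral_add_left (ENNReal.measurable_ofReal.comp
                (hL_meas.max measurable_const)) _
          _ < ⊤ := ENNReal.add_lt_top.mpr
              ⟨hfin_pos, lt_of_le_of_lt hLneg ENNReal.one_lt_top⟩
      exact this
    have hllrm_int : Integrable (llr ρ m) ρ := by
      refine (hint.sub hLint).congr ?_
      filter_upwards [hdecomp] with x hx
      simp only [Pi.sub_apply]
      linarith
    have h0m := NN ρ m hρm hllrm_int
    have hsum : ∫ x, llr ρ σ x ∂ρ = ∫ x, llr ρ m x ∂ρ + ∫ x, L x ∂ρ := by
      rw [← integral_add hllrm_int hLint]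
      exact integral_congr_ae hdecomp
    have hle : ∫ x, L x ∂ρ ≤ ∫ x, llr ρ σ x ∂ρ := by linarith
    have hint' : Integrable (llr ρ' σ') ρ' :=
      (integrable_map_measure (measurable_llr ρ' σ').aestronglyMeasurable
        hF.aemeasurable).mpr hLint
    have hIeq : ∫ y, llr ρ' σ' y ∂ρ' = ∫ x, L x ∂ρ :=
      integral_map hF.aemeasurable (measurable_llr _ _).aestronglyMeasurable
    have e1 : klDivE ρ σ = ENNReal.ofReal (∫ x, llr ρ σ x ∂ρ) := by
      rw [klDivE]
      exact if_pos ⟨hac, hint0⟩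
    have e2 : klDivE ρ' σ' = ENNReal.ofReal (∫ y, llr ρ' σ' y ∂ρ') := by
      rw [klDivE]
      exact if_pos ⟨hac', hint'⟩
    rw [e1]
    calc klDivE ρ' σ' = ENNReal.ofReal (∫ y, llr ρ' σ' y ∂ρ') := e2
      _ ≤ ENNReal.ofReal (∫ x, llr ρ σ x ∂ρ) := by
          refine ENNReal.ofReal_le_ofReal ?_
          rw [hIeq]
          exact hle
  · have h : klDivE ρ σ = ⊤ := by rw [klDivE, if_neg hc]
    rw [h]
    exact le_top

/-- Mutual information of a joint law on a product space. -/
noncomputable def mi {α β : Type*} [MeasurableSpace α] [MeasurableSpace β]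
    (ρ : Measure (α × β)) : ℝ≥0∞ :=
  klDivE ρ ((ρ.map Prod.fst).prod (ρ.map Prod.snd))

lemma mi_map_le {γ γ' δ : Type*} [MeasurableSpace γ] [MeasurableSpace γ'] [MeasurableSpace δ]
    (ρ : Measure (γ × δ)) [IsProbabilityMeasure ρ] {f : γ → γ'} (hf : Measurable f) :
    mi (ρ.map (Prod.map f id)) ≤ mi ρ := by
  have hF : Measurable (Prod.map f (id : δ → δ)) := hf.prodMap measurable_id
  haveI : IsProbabilityMeasure (ρ.map Prod.fst) :=
    Measure.isProbabilityMeasure_map measurable_fst.aemeasurable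
  haveI : IsProbabilityMeasure (ρ.map Prod.snd) :=
    Measure.isProbabilityMeasure_map measurable_snd.aemeasurable
  have h1 : (ρ.map (Prod.map f id)).map Prod.fst = (ρ.map Prod.fst).map f := by
    rw [Measure.map_map measurable_fst hF, Measure.map_map hf measurable_fst]
    rfl
  have h2 : (ρ.map (Prod.map f id)).map Prod.snd = ρ.map Prod.snd := by
    rw [Measure.map_map measurable_snd hF]
    rfl
  have h3 : ((ρ.map Prod.fst).map f).prod (ρ.map Prod.snd)
      = ((ρ.map Prod.fst).prod (ρ.map Prod.snd)).map (Prod.map f id) := by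
    rw [← Measure.map_prod_map _ _ hf measurable_id, Measure.map_id]
  rw [mi, h1, h2, h3, mi]
  exact klDivE_map_le ρ _ hF

lemma mi_comap_le {α α' δ : Type*} [MeasurableSpace α] [MeasurableSpace α'] [MeasurableSpace δ]
    (μ0 : Measure α) [IsProbabilityMeasure μ0] (η : Kernel α' δ) [IsMarkovKernel η]
    {f : α → α'} (hf : Measurable f) :
    mi (μ0 ⊗ₘ (η.comap f hf)) ≤ mi ((μ0.map f) ⊗ₘ η) := by
  set ν := μ0.map f with hν
  haveI : IsProbabilityMeasure ν := Measure.isProbabilityMeasure_map hf.aemeasurable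
  set ρ : Measure (α × δ) := μ0 ⊗ₘ (η.comap f hf) with hρ
  set ρ' : Measure (α' × δ) := ν ⊗ₘ η with hρ'2
  haveI : IsProbabilityMeasure ρ := by
    constructor
    rw [hρ, Measure.compProd_apply_univ]
    exact measure_univ
  haveI : IsProbabilityMeasure ρ' := by
    constructor
    rw [hρ'2, Measure.compProd_apply_univ]
    exact measure_univ
  set P := ρ'.map Prod.snd with hP
  haveI : IsProbabilityMeasure P := Measure.isProbabilityMeasure_map measurable_snd.aemeasurable
  have hF : Measurable (Prod.map f (id : δ → δ)) := hf.prodMap measurable_id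
  -- marginals
  have hfst : ρ.map Prod.fst = μ0 := Measure.fst_compProd μ0 _
  have hfst' : ρ'.map Prod.fst = ν := Measure.fst_compProd ν _
  have hsnd : ρ.map Prod.snd = P := by
    ext s hs
    rw [hP, Measure.map_apply measurable_snd hs, Measure.map_apply measurable_snd hs,
      Measure.compProd_apply (measurable_snd hs), Measure.compProd_apply (measurable_snd hs)]
    have hint : ∀ (a : α), (η.comap f hf) a (Prod.mk a ⁻¹' (Prod.snd ⁻¹' s)) = η (f a) s := by
      intro a; rfl
    have hint2 : ∀ (b : α'), η b (Prod.mk b ⁻¹' (Prod.snd ⁻¹' s)) = η b s := fun b => rfl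
    simp only [hint, hint2]
    rw [hν, lintegral_map (η.measurable_coe hs) hf]
  -- pushforward identities
  have hmap : ρ.map (Prod.map f id) = ρ' := by
    ext s hs
    rw [Measure.map_apply hF hs, Measure.compProd_apply (hF hs), Measure.compProd_apply hs]
    have hint : ∀ (a : α), (η.comap f hf) a (Prod.mk a ⁻¹' (Prod.map f id ⁻¹' s))
        = η (f a) (Prod.mk (f a) ⁻¹' s) := by intro a; rfl
    simp only [hint]
    rw [hν, lintegral_map (Kernel.measurable_kernel_prodMk_left hs) hf]
  set σm : Measure (α × δ) := μ0.prod P with hσm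
  set σm' : Measure (α' × δ) := ν.prod P with hσm'
  have hσmap : σm.map (Prod.map f id) = σm' := by
    rw [hσm, hσm', hν, ← Measure.map_prod_map _ _ hf measurable_id, Measure.map_id]
  have hmi' : mi ρ' = klDivE ρ' σm' := by rw [mi, hfst']
  have hmi : mi ρ = klDivE ρ σm := by rw [mi, hfst, hsnd]
  rw [hmi, hmi']
  by_cases hc : ρ' ≪ σm' ∧ Integrable (fun y => Real.log ((ρ'.rnDeriv σm' y).toReal)) ρ'
  · obtain ⟨hac', hint'⟩ := hc
    set g := ρ'.rnDeriv σm' with hg_def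
    have hg : Measurable g := Measure.measurable_rnDeriv _ _
    have hgF : Measurable (g ∘ Prod.map f id) := hg.comp hF
    -- the slice densities
    have hslice : ∀ (B : Set δ), MeasurableSet B →
        (fun b => η b B) =ᵐ[ν] (fun b => ∫⁻ t in B, g (b, t) ∂P) := by
      intro B hB
      have hm2 : Measurable (fun b => ∫⁻ t in B, g (b, t) ∂P) :=
        Measurable.lintegral_prod_right (hg : Measurable fun p : α' × δ => g p)
      refine ae_eq_of_forall_setLIntegral_eq_of_sigmaFinite (η.measurable_coe hB) hm2 ?_
      intro A hA _
      have h1 : ∫⁻ b in A, η b B ∂ν = ρ' (A ×ˢ B) :=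
        (Measure.compProd_apply_prod hA hB).symm
      have h2 : ρ' (A ×ˢ B) = ∫⁻ p in A ×ˢ B, g p ∂σm' :=
        (Measure.setLIntegral_rnDeriv hac' _).symm
      have h3 : ∫⁻ p in A ×ˢ B, g p ∂σm' = ∫⁻ b in A, ∫⁻ t in B, g (b, t) ∂P ∂ν := by
        rw [hσm', ← Measure.prod_restrict A B]
        exact lintegral_prod g hg.aemeasurable
      rw [h1, h2, h3]
    -- key identity: ρ is σm with density g ∘ F
    have hkey : ρ = σm.withDensity (g ∘ Prod.map f id) := by
      have hmass : σm.withDensity (g ∘ Prod.map f id) Set.univ = 1 := by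
        rw [withDensity_apply _ MeasurableSet.univ, Measure.restrict_univ]
        have h1 : ∫⁻ p, (g ∘ Prod.map f id) p ∂σm = ∫⁻ y, g y ∂σm' := by
          rw [← hσmap, lintegral_map hg hF]
          rfl
        rw [h1, Measure.lintegral_rnDeriv hac']
        simp
      haveI : IsFiniteMeasure (σm.withDensity (g ∘ Prod.map f id)) := by
        constructor; rw [hmass]; exact ENNReal.one_lt_top
      refine ext_of_generate_finite _ generateFrom_prod.symm isPiSystem_prod ?_ ?_
      · rintro _ ⟨A, hA, B, hB, rfl⟩
        simp only [Set.mem_setOf_eq] at hA hB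
        have hL : ρ (A ×ˢ B) = ∫⁻ a in A, η (f a) B ∂μ0 := by
          rw [hρ, Measure.compProd_apply_prod hA hB]
          rfl
        have hcomp : (fun a => η (f a) B) =ᵐ[μ0] (fun a => ∫⁻ t in B, g (f a, t) ∂P) := by
          have := hslice B hB
          rw [hν] at this
          exact ae_of_ae_map hf.aemeasurable this
        have hR : σm.withDensity (g ∘ Prod.map f id) (A ×ˢ B)
            = ∫⁻ a in A, ∫⁻ t in B, g (f a, t) ∂P ∂μ0 := by
          rw [withDensity_apply _ (hA.prod hB), hσm, ← Measure.prod_restrict A B]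
          exact lintegral_prod _ hgF.aemeasurable
        rw [hL, hR]
        exact lintegral_congr_ae (ae_restrict_of_ae hcomp)
      · rw [hmass]
        exact measure_univ
    -- conclude equality of the two KL divergences
    have hacρ : ρ ≪ σm := by rw [hkey]; exact withDensity_absolutelyContinuous σm _
    have hrd : ρ.rnDeriv σm =ᵐ[σm] g ∘ Prod.map f id := by
      conv_lhs => rw [hkey]
      exact Measure.rnDeriv_withDensity σm hgF
    have hrdρ : ∀ᵐ p ∂ρ, ρ.rnDeriv σm p = g (Prod.map f id p) := hrd.filter_mono hacρ.ae_le
    have hfun : (fun p => Real.log ((ρ.rnDeriv σm p).toReal))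
        =ᵐ[ρ] (fun p => Real.log ((g (Prod.map f id p)).toReal)) := by
      filter_upwards [hrdρ] with p hp
      rw [hp]
    have hρ'map : ρ' = ρ.map (Prod.map f id) := hmap.symm
    have hintρ : Integrable (fun p => Real.log ((ρ.rnDeriv σm p).toReal)) ρ := by
      refine Integrable.congr ?_ hfun.symm
      have hmapint : Integrable (fun y => Real.log ((ρ'.rnDeriv σm' y).toReal))
          (ρ.map (Prod.map f id)) := by
        rw [← hρ'map]; exact hint'
      exact (integrable_map_measure (measurable_llr ρ' σm').aestronglyMeasurable
        hF.aemeasurable).mp hmapint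
    have h4 : ∫ y, llr ρ' σm' y ∂(ρ.map (Prod.map f id))
        = ∫ p, llr ρ' σm' (Prod.map f id p) ∂ρ :=
      integral_map hF.aemeasurable (measurable_llr ρ' σm').aestronglyMeasurable
    rw [← hρ'map] at h4
    have hIeq : ∫ p, Real.log ((ρ.rnDeriv σm p).toReal) ∂ρ
        = ∫ y, Real.log ((ρ'.rnDeriv σm' y).toReal) ∂ρ' := by
      rw [integral_congr_ae hfun]
      exact h4.symm
    have e1 : klDivE ρ σm = ENNReal.ofReal (∫ p, Real.log ((ρ.rnDeriv σm p).toReal) ∂ρ) := by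
      rw [klDivE]
      exact if_pos ⟨hacρ, hintρ⟩
    have e2 : klDivE ρ' σm' = ENNReal.ofReal (∫ y, Real.log ((ρ'.rnDeriv σm' y).toReal) ∂ρ') := by
      rw [klDivE]
      exact if_pos ⟨hac', hint'⟩
    rw [e1, e2, hIeq]
  · have h : klDivE ρ' σm' = ⊤ := by rw [klDivE, if_neg hc]
    rw [h]
    exact le_top

lemma measurable_x1p2 {α β γ : Type*} [MeasurableSpace α] [MeasurableSpace β] [MeasurableSpace γ] :
    Measurable (fun p : (α × β) × γ => (p.1.1, p.2)) :=
  (measurable_fst.comp measurable_fst).prodMk measurable_snd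

lemma measurable_x2p2 {α β γ : Type*} [MeasurableSpace α] [MeasurableSpace β] [MeasurableSpace γ] :
    Measurable (fun p : (α × β) × γ => (p.1.2, p.2)) :=
  (measurable_snd.comp measurable_fst).prodMk measurable_snd

lemma sideX_eq {α β γ : Type*} [MeasurableSpace α] [MeasurableSpace β] [MeasurableSpace γ]
    (μ : Measure (α × β)) [SFinite μ] (κ : Kernel α γ) [IsSFiniteKernel κ] :
    (μ.compProd (κ.comap Prod.fst measurable_fst)).map (fun p => (p.1.1, p.2))
      = (μ.map Prod.fst) ⊗ₘ κ := by
  ext s hs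
  rw [Measure.map_apply measurable_x1p2 hs, Measure.compProd_apply (measurable_x1p2 hs),
    Measure.compProd_apply hs,
    lintegral_map (Kernel.measurable_kernel_prodMk_left hs) measurable_fst]
  rfl

lemma sideY_eq {α β α' β' γ : Type*} [MeasurableSpace α] [MeasurableSpace β]
    [MeasurableSpace α'] [MeasurableSpace β'] [MeasurableSpace γ]
    (μ : Measure (α × β)) [SFinite μ] {φ : α → α'} {ψ : β → β'}
    (hφ : Measurable φ) (hψ : Measurable ψ) (κ' : Kernel α' γ) [IsSFiniteKernel κ'] :
    ((μ.map (Prod.map φ ψ)).compProd (κ'.comap Prod.fst measurable_fst)).map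
        (fun p => (p.1.2, p.2))
      = (((μ.compProd (((κ'.comap φ hφ)).comap Prod.fst measurable_fst)).map
          (fun p => (p.1.2, p.2))).map (Prod.map ψ id)) := by
  ext s hs
  rw [Measure.map_map (hψ.prodMap measurable_id) measurable_x2p2,
    Measure.map_apply ((hψ.prodMap measurable_id).comp measurable_x2p2) hs,
    Measure.compProd_apply (((hψ.prodMap measurable_id).comp measurable_x2p2) hs),
    Measure.map_apply measurable_x2p2 hs,
    Measure.compProd_apply (measurable_x2p2 hs)]
  set s₂ : Set ((α' × β') × γ) := (fun q : (α' × β') × γ => (q.1.2, q.2)) ⁻¹' s with hs₂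
  have hs₂m : MeasurableSet s₂ := measurable_x2p2 hs
  rw [lintegral_map (Kernel.measurable_kernel_prodMk_left hs₂m) (hφ.prodMap hψ)]
  rfl
/-- The information bottleneck problem in minimization form: the infimum of `I(T;X)` over
Markov kernels `κ` producing `T` from `X` (so that `T — X — Y` is a Markov chain), subject to
`I(T;Y) ≥ c`, where `μ` is the joint law of `(X,Y)`. -/
noncomputable def IBmin {α β : Type*} [MeasurableSpace α] [MeasurableSpace β]
    (μ : Measure (α × β)) (c : ℝ≥0∞) : ℝ≥0∞ :=
  sInf {r : ℝ≥0∞ | ∃ κ : Kernel α ℝ, IsMarkovKernel κ ∧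
    c ≤ mi ((μ.compProd (κ.comap Prod.fst measurable_fst)).map (fun p => (p.1.2, p.2))) ∧
    r = mi ((μ.compProd (κ.comap Prod.fst measurable_fst)).map (fun p => (p.1.1, p.2)))}

/-- data processing lemma for the IB curve: for any measurable maps `φ, ψ` and
any constraint level `c`, the IB minimum for `(X,Y)` is at most the IB minimum for
`(φ(X), ψ(Y))`; equivalently, the IB tradeoff curve of `(φ(X), ψ(Y))` is dominated by that of
`(X,Y)`. -/
theorem ib_data_processing
    {α β α' β' : Type*} [MeasurableSpace α] [MeasurableSpace β]
    [MeasurableSpace α'] [MeasurableSpace β']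
    (μ : Measure (α × β)) [IsProbabilityMeasure μ]
    (φ : α → α') (ψ : β → β') (hφ : Measurable φ) (hψ : Measurable ψ)
    (c : ℝ≥0∞) :
    IBmin μ c ≤ IBmin (μ.map (Prod.map φ ψ)) c := by
  haveI : IsProbabilityMeasure (μ.map (Prod.map φ ψ)) :=
    Measure.isProbabilityMeasure_map (hφ.prodMap hψ).aemeasurable
  rw [IBmin, IBmin]
  refine sInf_le_sInf_of_isCoinitialFor ?_
  rintro r' ⟨κ', hκ', hc', hr'⟩
  haveI := hκ'
  refine ⟨mi ((μ.compProd ((κ'.comap φ hφ).comap Prod.fst measurable_fst)).map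
      (fun p => (p.1.1, p.2))), ⟨κ'.comap φ hφ, inferInstance, ?_, rfl⟩, ?_⟩
  · haveI : IsProbabilityMeasure
        ((μ.compProd ((κ'.comap φ hφ).comap Prod.fst measurable_fst)).map
          (fun p => (p.1.2, p.2))) :=
      Measure.isProbabilityMeasure_map measurable_x2p2.aemeasurable
    calc c ≤ mi (((μ.map (Prod.map φ ψ)).compProd
            (κ'.comap Prod.fst measurable_fst)).map (fun p => (p.1.2, p.2))) := hc'
      _ = mi (((μ.compProd ((κ'.comap φ hφ).comap Prod.fst measurable_fst)).map
            (fun p => (p.1.2, p.2))).map (Prod.map ψ id)) := by rw [sideY_eq μ hφ hψ κ']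
      _ ≤ mi ((μ.compProd ((κ'.comap φ hφ).comap Prod.fst measurable_fst)).map
            (fun p => (p.1.2, p.2))) := mi_map_le _ hψ
  · rw [hr', sideX_eq, sideX_eq]
    have hfstmap : (μ.map (Prod.map φ ψ)).map Prod.fst = (μ.map Prod.fst).map φ := by
      rw [Measure.map_map measurable_fst (hφ.prodMap hψ), Measure.map_map hφ measurable_fst]
      rfl
    rw [hfstmap]
    haveI : IsProbabilityMeasure (μ.map Prod.fst) :=
      Measure.isProbabilityMeasure_map measurable_fst.aemeasurable
    exact mi_comap_le (μ.map Prod.fst) κ' hφ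
end
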